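/- Let p ≥ 1 affine maps f_i : ℝ^D → ℝ^D of the form f_i(x) = A_i x + b_i where A_i = diag(a_{i,1},…,a_{i,D}) is diagonal with non-negative entries and b_i = (b_{i,1},…,b_{i,D}). Let K_0 be a nonempty compact subset of ℝ^D and consider the renormalized orbit with respect to the max-radius function ρ_∞. Assume that max over i ∈ {1,…,p}, j ∈ {1,…,D}, and x = (x_1,…,x_D) ∈ H_{ρ_∞}(K_0) of |a_{i,j} x_j + b_{i,j}| is strictly greater than max_{i,j} |a_{i,j}|. Then the normalizing sequence (d_n)_{n≥1} is increasing and converges to some d > max_{i,j}|a_{i,j}|, and the sequence (H_{ρ_∞}^n(K_0))_n converges in the Hausdorff metric to the attractor L_d of the IFS {f_1/d, …, f_p/d}. -/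

import Mathlib

open Metric Filter Pointwise Topology

noncomputable section

/-- The max-radius function `ρ_∞(K) = max {|x_j| : x ∈ K, 1 ≤ j ≤ D}`. -/
def radInf {D : ℕ} (K : Set (EuclideanSpace ℝ (Fin (D + 1)))) : ℝ :=
  sSup {r : ℝ | ∃ x ∈ K, ∃ j, |x j| = r}

/-- The Hutchinson operator `H(K) = ⋃ i, f i '' K`. -/
def hutch {D p : ℕ}
    (f : Fin (p + 1) → EuclideanSpace ℝ (Fin (D + 1)) → EuclideanSpace ℝ (Fin (D + 1)))
    (K : Set (EuclideanSpace ℝ (Fin (D + 1)))) : Set (EuclideanSpace ℝ (Fin (D + 1))) :=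
  ⋃ i, f i '' K

/-- The `ρ_∞`-renormalized Hutchinson operator `H_{ρ_∞}(K) = ρ_∞(H(K))⁻¹ • H(K)`. -/
def hutchRadInf {D p : ℕ}
    (f : Fin (p + 1) → EuclideanSpace ℝ (Fin (D + 1)) → EuclideanSpace ℝ (Fin (D + 1)))
    (K : Set (EuclideanSpace ℝ (Fin (D + 1)))) : Set (EuclideanSpace ℝ (Fin (D + 1))) :=
  (radInf (hutch f K))⁻¹ • hutch f K

/-!
Write `K_n` for the orbit, `d_n = ρ_∞(H(K_n))` and `λ = max |a_{i,j}|`. For `n ≥ 1` the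
set `K_n` lies in the cube `[-1, 1]^D`. If `d_n = |a_{i,j} x_j + b_{i,j}|` with `x ∈ K_n`, the
point `f_i(x) / d_n ∈ K_{n+1}` has `j`-th coordinate `± 1`, the sign of `a_{i,j} x_j + b_{i,j}`;
as `a_{i,j} ≥ 0` and `|x_j| ≤ 1`, moving `x_j` to that extreme point can only increase
`|a_{i,j} x_j + b_{i,j}|`, so `d_n ≤ d_{n+1}`. The cube also bounds `d_n`, hence `d_n ↑ d`, and
`d ≥ d_1 > λ` by hypothesis. Finally `K ↦ d⁻¹ H(K)` is a `λ / d`-contraction for the Hausdorff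
distance and `K_{n+1} = d_n⁻¹ H(K_n)` differs from `d⁻¹ H(K_n)` by `O(|d_n⁻¹ - d⁻¹|)`, so
`h_n = dist_H(K_n, L_d)` satisfies `h_{n+1} ≤ (λ / d) h_n + o(1)`, which forces `h_n → 0`.
-/

open scoped NNReal

lemma abs_mul_add_le_of_abs_le_one {α β t : ℝ} (hα : 0 ≤ α) (ht : |t| ≤ 1) :
    |α * t + β| ≤ |α * ((α * t + β) / |α * t + β|) + β| := by
  rcases lt_trichotomy (α * t + β) 0 with h | h | h
  · rw [abs_of_neg h, div_neg, div_self h.ne]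
    have : α * -1 ≤ α * t := mul_le_mul_of_nonneg_left (neg_le_of_abs_le ht) hα
    exact (neg_le_neg (by linarith)).trans (neg_le_abs _)
  · simp [h]
  · rw [abs_of_pos h, div_self h.ne']
    have : α * t ≤ α * 1 := mul_le_mul_of_nonneg_left (le_of_abs_le ht) hα
    exact le_trans (by linarith) (le_abs_self _)

lemma tendsto_zero_of_le_mul_add {u ε : ℕ → ℝ} {c : ℝ} (hc0 : 0 ≤ c) (hc1 : c < 1)
    (hu : ∀ n, 0 ≤ u n) (hrec : ∀ n, u (n + 1) ≤ c * u n + ε n)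
    (hε : Tendsto ε atTop (𝓝 0)) : Tendsto u atTop (𝓝 0) := by
  refine tendsto_order.2 ⟨fun _ h ↦ .of_forall fun n ↦ h.trans_le (hu n), fun δ hδ ↦ ?_⟩
  obtain ⟨N, hN⟩ := eventually_atTop.1 <|
    hε.eventually (eventually_le_nhds (mul_pos (sub_pos.2 hc1) (half_pos hδ)))
  -- once `ε ≤ (1 - c) δ / 2`, the excess of `u` over `δ / 2` decays geometrically
  have hgeom : ∀ k, u (N + k) - δ / 2 ≤ c ^ k * (u N - δ / 2) := by
    intro k
    induction k with
    | zero => simp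
    | succ k ih =>
      calc u (N + (k + 1)) - δ / 2 ≤ c * (u (N + k) - δ / 2) := by
            rw [← add_assoc]
            linarith [hrec (N + k), hN (N + k) (Nat.le_add_right N k)]
        _ ≤ c * (c ^ k * (u N - δ / 2)) := mul_le_mul_of_nonneg_left ih hc0
        _ = c ^ (k + 1) * (u N - δ / 2) := by ring
  have hlim : Tendsto (fun k ↦ δ / 2 + c ^ k * (u N - δ / 2)) atTop (𝓝 (δ / 2)) := by
    simpa using tendsto_const_nhds.add
      ((tendsto_pow_atTop_nhds_zero_of_lt_one hc0 hc1).mul_const (u N - δ / 2))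
  obtain ⟨M, hM⟩ := eventually_atTop.1 (hlim.eventually (eventually_lt_nhds (half_lt_self hδ)))
  refine eventually_atTop.2 ⟨N + M, fun n hn ↦ ?_⟩
  obtain ⟨k, rfl⟩ := Nat.exists_eq_add_of_le (le_of_add_le_left hn)
  linarith [hgeom k, hM k (by omega)]

section Hausdorff

variable {α β : Type*}

lemma LipschitzWith.infEDist_image_le [PseudoEMetricSpace α] [PseudoEMetricSpace β]
    {g : α → β} {K : ℝ≥0} (hg : LipschitzWith K g) (x : α) {t : Set α} (ht : t.Nonempty) :
    infEDist (g x) (g '' t) ≤ K * infEDist x t := by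
  rcases eq_or_ne K 0 with rfl | hK
  · obtain ⟨y, hy⟩ := ht
    calc infEDist (g x) (g '' t) ≤ edist (g x) (g y) :=
          infEDist_le_edist_of_mem (Set.mem_image_of_mem g hy)
      _ ≤ 0 := by simpa using hg x y
      _ ≤ _ := bot_le
  · simp_rw [infEDist, ENNReal.mul_iInf_of_ne (ENNReal.coe_ne_zero.2 hK) ENNReal.coe_ne_top]
    exact le_iInf₂ fun y hy ↦
      (infEDist_le_edist_of_mem (Set.mem_image_of_mem g hy)).trans (hg x y)

lemma LipschitzWith.hausdorffEDist_image_le [PseudoEMetricSpace α] [PseudoEMetricSpace β]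
    {g : α → β} {K : ℝ≥0} (hg : LipschitzWith K g) {s t : Set α} (hs : s.Nonempty)
    (ht : t.Nonempty) : hausdorffEDist (g '' s) (g '' t) ≤ K * hausdorffEDist s t := by
  refine hausdorffEDist_le_of_infEDist ?_ ?_ <;> rintro _ ⟨x, hx, rfl⟩
  · exact (hg.infEDist_image_le x ht).trans (by gcongr; exact infEDist_le_hausdorffEDist_of_mem hx)
  · rw [hausdorffEDist_comm]
    exact (hg.infEDist_image_le x hs).trans (by gcongr; exact infEDist_le_hausdorffEDist_of_mem hx)

lemma hausdorffDist_iUnion_image_le {ι : Type*} [PseudoMetricSpace α] [PseudoMetricSpace β]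
    {g : ι → α → β} {K : ℝ≥0} (hg : ∀ i, LipschitzWith K (g i)) {s t : Set α}
    (hs : s.Nonempty) (ht : t.Nonempty) (hst : hausdorffEDist s t ≠ ⊤) :
    hausdorffDist (⋃ i, g i '' s) (⋃ i, g i '' t) ≤ K * hausdorffDist s t := by
  have h : hausdorffEDist (⋃ i, g i '' s) (⋃ i, g i '' t) ≤ K * hausdorffEDist s t :=
    hausdorffEDist_iUnion_le.trans (iSup_le fun i ↦ (hg i).hausdorffEDist_image_le hs ht)
  simpa [hausdorffDist] using ENNReal.toReal_mono (ENNReal.mul_ne_top ENNReal.coe_ne_top hst) h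

lemma hausdorffDist_smul_smul_le {𝕜 E : Type*} [NormedField 𝕜] [SeminormedAddCommGroup E]
    [NormedSpace 𝕜 E] {S : Set E} {R : ℝ} (hR : 0 ≤ R) (hS : ∀ z ∈ S, ‖z‖ ≤ R)
    (r s : 𝕜) : hausdorffDist (r • S) (s • S) ≤ ‖r - s‖ * R := by
  have key : ∀ z ∈ S, dist (r • z) (s • z) ≤ ‖r - s‖ * R := fun z hz ↦ by
    rw [dist_eq_norm, ← sub_smul, norm_smul]
    exact mul_le_mul_of_nonneg_left (hS z hz) (norm_nonneg _)
  refine hausdorffDist_le_of_mem_dist (by positivity) ?_ ?_ <;> rintro _ ⟨z, hz, rfl⟩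
  · exact ⟨s • z, Set.smul_mem_smul_set hz, key z hz⟩
  · exact ⟨r • z, Set.smul_mem_smul_set hz, dist_comm (r • z) _ ▸ key z hz⟩

end Hausdorff

section EuclideanSpace

variable {ι : Type*} [Fintype ι]

lemma EuclideanSpace.norm_le_sqrt_card_mul {x : EuclideanSpace ℝ ι} {r : ℝ} (hr : 0 ≤ r)
    (h : ∀ j, |x j| ≤ r) : ‖x‖ ≤ √(Fintype.card ι) * r := by
  rw [EuclideanSpace.norm_eq, ← Real.sqrt_sq hr, ← Real.sqrt_mul (Nat.cast_nonneg _)]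
  gcongr
  calc ∑ j, ‖x j‖ ^ 2 ≤ ∑ _j : ι, r ^ 2 := by
        gcongr with j
        rw [Real.norm_eq_abs]
        exact h j
    _ = Fintype.card ι * r ^ 2 := by simp

lemma EuclideanSpace.dist_le_mul_of_forall_dist_apply_le {x y x' y' : EuclideanSpace ℝ ι}
    {c : ℝ} (hc : 0 ≤ c) (h : ∀ j, dist (x' j) (y' j) ≤ c * dist (x j) (y j)) :
    dist x' y' ≤ c * dist x y := by
  rw [EuclideanSpace.dist_eq, EuclideanSpace.dist_eq, ← Real.sqrt_sq hc,
    ← Real.sqrt_mul (sq_nonneg c), Finset.mul_sum]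
  gcongr with j
  rw [← mul_pow]
  exact pow_le_pow_left₀ dist_nonneg (h j) 2

variable {g : EuclideanSpace ℝ ι → EuclideanSpace ℝ ι} {α β : ι → ℝ}

lemma lipschitzWith_of_apply_eq_mul_add (hg : ∀ x j, g x j = α j * x j + β j) {c : ℝ≥0}
    (hc : ∀ j, |α j| ≤ c) : LipschitzWith c g := by
  refine LipschitzWith.of_dist_le_mul fun x y ↦
    EuclideanSpace.dist_le_mul_of_forall_dist_apply_le c.coe_nonneg fun j ↦ ?_
  rw [hg, hg, Real.dist_eq, Real.dist_eq, add_sub_add_right_eq_sub, ← mul_sub, abs_mul]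
  exact mul_le_mul_of_nonneg_right (hc j) (abs_nonneg _)

lemma continuous_of_apply_eq_mul_add (hg : ∀ x j, g x j = α j * x j + β j) : Continuous g := by
  obtain ⟨c, hc⟩ := Finite.exists_le fun j ↦ ‖α j‖₊
  exact (lipschitzWith_of_apply_eq_mul_add hg fun j ↦ NNReal.coe_le_coe.2 (hc j)).continuous

end EuclideanSpace

section RadInf

variable {D : ℕ} {K : Set (EuclideanSpace ℝ (Fin (D + 1)))}

lemma radInf_nonneg (K : Set (EuclideanSpace ℝ (Fin (D + 1)))) : 0 ≤ radInf K :=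
  Real.sSup_nonneg <| by rintro _ ⟨x, -, j, rfl⟩; exact abs_nonneg _

lemma IsCompact.isCompact_abs_apply (hK : IsCompact K) :
    IsCompact {r : ℝ | ∃ x ∈ K, ∃ j, |x j| = r} := by
  have : {r : ℝ | ∃ x ∈ K, ∃ j, |x j| = r} =
      ⋃ j, (fun x : EuclideanSpace ℝ (Fin (D + 1)) ↦ |x j|) '' K := by
    ext r
    simp only [Set.mem_ofPred_eq, Set.mem_iUnion, Set.mem_image]
    tauto
  rw [this]
  exact isCompact_iUnion fun j ↦ hK.image (PiLp.continuous_apply 2 _ j).abs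

lemma abs_apply_le_radInf (hK : IsCompact K) {x : EuclideanSpace ℝ (Fin (D + 1))}
    (hx : x ∈ K) (j : Fin (D + 1)) : |x j| ≤ radInf K :=
  le_csSup hK.isCompact_abs_apply.bddAbove ⟨x, hx, j, rfl⟩

lemma radInf_le (hK : K.Nonempty) {r : ℝ} (h : ∀ x ∈ K, ∀ j, |x j| ≤ r) :
    radInf K ≤ r :=
  csSup_le (hK.elim fun x hx ↦ ⟨_, x, hx, 0, rfl⟩) <| by
    rintro _ ⟨x, hx, j, rfl⟩
    exact h x hx j

lemma exists_abs_apply_eq_radInf (hK : IsCompact K) (hne : K.Nonempty) :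
    ∃ x ∈ K, ∃ j, |x j| = radInf K :=
  hK.isCompact_abs_apply.sSup_mem (hne.elim fun x hx ↦ ⟨_, x, hx, 0, rfl⟩)

lemma abs_apply_le_one_of_mem_inv_radInf_smul (hK : IsCompact K)
    {x : EuclideanSpace ℝ (Fin (D + 1))} (hx : x ∈ (radInf K)⁻¹ • K) (j : Fin (D + 1)) :
    |x j| ≤ 1 := by
  obtain ⟨y, hy, rfl⟩ := hx
  rw [PiLp.smul_apply, smul_eq_mul, abs_mul, abs_inv, abs_of_nonneg (radInf_nonneg K)]
  exact inv_mul_le_one_of_le₀ (abs_apply_le_radInf hK hy j) (radInf_nonneg K)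

lemma norm_le_sqrt_mul_radInf (hK : IsCompact K) {x : EuclideanSpace ℝ (Fin (D + 1))}
    (hx : x ∈ K) : ‖x‖ ≤ √(D + 1) * radInf K := by
  simpa using EuclideanSpace.norm_le_sqrt_card_mul (radInf_nonneg K) (abs_apply_le_radInf hK hx)

end RadInf

section Hutchinson

variable {D p : ℕ}
  {f : Fin (p + 1) → EuclideanSpace ℝ (Fin (D + 1)) → EuclideanSpace ℝ (Fin (D + 1))}
  {K : Set (EuclideanSpace ℝ (Fin (D + 1)))}

@[simp]
lemma mem_hutch {x : EuclideanSpace ℝ (Fin (D + 1))} :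
    x ∈ hutch f K ↔ ∃ i, ∃ y ∈ K, f i y = x := by
  simp [hutch]

lemma IsCompact.hutch (hf : ∀ i, Continuous (f i)) (hK : IsCompact K) :
    IsCompact (hutch f K) :=
  isCompact_iUnion fun i ↦ hK.image (hf i)

lemma Set.Nonempty.hutch (hK : K.Nonempty) : (hutch f K).Nonempty :=
  hK.elim fun x hx ↦ ⟨f 0 x, mem_hutch.2 ⟨0, x, hx, rfl⟩⟩

lemma IsCompact.iterate_hutchRadInf (hf : ∀ i, Continuous (f i)) (hK : IsCompact K) (n : ℕ) :
    IsCompact ((hutchRadInf f)^[n] K) := by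
  induction n with
  | zero => exact hK
  | succ n ih => rw [Function.iterate_succ_apply']; exact (ih.hutch hf).smul _

lemma Set.Nonempty.iterate_hutchRadInf (hK : K.Nonempty) (n : ℕ) :
    ((hutchRadInf f)^[n] K).Nonempty := by
  induction n with
  | zero => exact hK
  | succ n ih => rw [Function.iterate_succ_apply']; exact ih.hutch.smul_set

lemma abs_apply_le_one_of_mem_iterate_succ (hf : ∀ i, Continuous (f i)) (hK : IsCompact K)
    {n : ℕ} {x : EuclideanSpace ℝ (Fin (D + 1))} (hx : x ∈ (hutchRadInf f)^[n + 1] K)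
    (j : Fin (D + 1)) : |x j| ≤ 1 := by
  rw [Function.iterate_succ_apply'] at hx
  exact abs_apply_le_one_of_mem_inv_radInf_smul ((hK.iterate_hutchRadInf hf n).hutch hf) hx j

lemma smul_hutch_eq_iUnion_image (c : ℝ) (K : Set (EuclideanSpace ℝ (Fin (D + 1)))) :
    c • hutch f K = ⋃ i, (fun x ↦ c • f i x) '' K := by
  simp only [hutch, ← Set.image_smul, Set.image_iUnion, Set.image_image]

variable {κ : ℝ≥0}

lemma hausdorffDist_smul_hutch_le (hf : ∀ i, LipschitzWith κ (f i)) (c : ℝ)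
    {A B : Set (EuclideanSpace ℝ (Fin (D + 1)))} (hA : A.Nonempty) (hB : B.Nonempty)
    (hAb : Bornology.IsBounded A) (hBb : Bornology.IsBounded B) :
    hausdorffDist (c • hutch f A) (c • hutch f B) ≤ |c| * κ * hausdorffDist A B := by
  rw [smul_hutch_eq_iUnion_image, smul_hutch_eq_iUnion_image]
  simpa using hausdorffDist_iUnion_image_le (fun i ↦ (lipschitzWith_smul c).comp (hf i)) hA hB
    (hausdorffEDist_ne_top_of_nonempty_of_bounded hA hB hAb hBb)

lemma hausdorffDist_hutchRadInf_le (hf : ∀ i, LipschitzWith κ (f i)) {d : ℝ} (hd : 0 < d)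
    {L : Set (EuclideanSpace ℝ (Fin (D + 1)))} (hKc : IsCompact K) (hK : K.Nonempty)
    (hLc : IsCompact L) (hL : L.Nonempty) (hfix : d⁻¹ • hutch f L = L) :
    hausdorffDist (hutchRadInf f K) L ≤
      κ / d * hausdorffDist K L +
        |(radInf (hutch f K))⁻¹ - d⁻¹| * (√(D + 1) * radInf (hutch f K)) := by
  have hH := hKc.hutch fun i ↦ (hf i).continuous
  calc hausdorffDist (hutchRadInf f K) L
      ≤ hausdorffDist (d⁻¹ • hutch f K) L +
          hausdorffDist (hutchRadInf f K) (d⁻¹ • hutch f K) :=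
        (hausdorffDist_triangle <| hausdorffEDist_ne_top_of_nonempty_of_bounded
          hK.hutch.smul_set hK.hutch.smul_set (hH.smul _).isBounded
          (hH.smul _).isBounded).trans_eq (add_comm _ _)
    _ ≤ _ := by
      gcongr
      · conv_lhs => rw [← hfix]
        simpa [abs_of_pos hd, div_eq_inv_mul] using
          hausdorffDist_smul_hutch_le hf d⁻¹ hK hL hKc.isBounded hLc.isBounded
      · rw [← Real.norm_eq_abs]
        exact hausdorffDist_smul_smul_le (mul_nonneg (Real.sqrt_nonneg _) (radInf_nonneg _))
          (fun z hz ↦ norm_le_sqrt_mul_radInf hH hz) _ _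

theorem tendsto_hausdorffDist_iterate_hutchRadInf (hf : ∀ i, LipschitzWith κ (f i))
    {K₀ L : Set (EuclideanSpace ℝ (Fin (D + 1)))} (hK₀c : IsCompact K₀)
    (hK₀ : K₀.Nonempty) {d : ℝ}
    (hd : Tendsto (fun n ↦ radInf (hutch f ((hutchRadInf f)^[n] K₀))) atTop (𝓝 d))
    (hκd : κ < d) (hLc : IsCompact L) (hL : L.Nonempty) (hfix : d⁻¹ • hutch f L = L) :
    Tendsto (fun n ↦ hausdorffDist ((hutchRadInf f)^[n] K₀) L) atTop (𝓝 0) := by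
  have hd0 : 0 < d := κ.coe_nonneg.trans_lt hκd
  refine tendsto_zero_of_le_mul_add (ε := fun n ↦
      |(radInf (hutch f ((hutchRadInf f)^[n] K₀)))⁻¹ - d⁻¹| *
        (√(D + 1) * radInf (hutch f ((hutchRadInf f)^[n] K₀))))
    (div_nonneg κ.coe_nonneg hd0.le) ((div_lt_one hd0).2 hκd) (fun n ↦ hausdorffDist_nonneg)
    (fun n ↦ ?_) ?_
  · rw [Function.iterate_succ_apply']
    exact hausdorffDist_hutchRadInf_le hf hd0
      (hK₀c.iterate_hutchRadInf (fun i ↦ (hf i).continuous) n) (hK₀.iterate_hutchRadInf n)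
      hLc hL hfix
  · simpa using ((hd.inv₀ hd0.ne').sub_const d⁻¹).abs.mul (hd.const_mul √(D + 1))

end Hutchinson

section DiagonalHutchinson

variable {D p : ℕ} {a b : Fin (p + 1) → Fin (D + 1) → ℝ}
  {f : Fin (p + 1) → EuclideanSpace ℝ (Fin (D + 1)) → EuclideanSpace ℝ (Fin (D + 1))}
  {K : Set (EuclideanSpace ℝ (Fin (D + 1)))}

lemma abs_mul_add_le_radInf_hutch (hf : ∀ i x j, f i x j = a i j * x j + b i j)
    (hK : IsCompact K) {x : EuclideanSpace ℝ (Fin (D + 1))} (hx : x ∈ K) (i : Fin (p + 1))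
    (j : Fin (D + 1)) : |a i j * x j + b i j| ≤ radInf (hutch f K) := by
  rw [← hf]
  exact abs_apply_le_radInf (hK.hutch fun i ↦ continuous_of_apply_eq_mul_add (hf i))
    (mem_hutch.2 ⟨i, x, hx, rfl⟩) j

lemma radInf_hutch_le_radInf_hutch_hutchRadInf (hf : ∀ i x j, f i x j = a i j * x j + b i j)
    (ha : ∀ i j, 0 ≤ a i j) (hK : IsCompact K) (hne : K.Nonempty)
    (hK1 : ∀ x ∈ K, ∀ j, |x j| ≤ 1) :
    radInf (hutch f K) ≤ radInf (hutch f (hutchRadInf f K)) := by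
  have hfc i := continuous_of_apply_eq_mul_add (hf i)
  obtain ⟨y, hy, j, hyj⟩ := exists_abs_apply_eq_radInf (hK.hutch hfc) hne.hutch
  obtain ⟨i, x, hx, rfl⟩ := mem_hutch.1 hy
  have hw : (radInf (hutch f K))⁻¹ • f i x ∈ hutchRadInf f K :=
    Set.smul_mem_smul_set (mem_hutch.2 ⟨i, x, hx, rfl⟩)
  calc radInf (hutch f K) = |a i j * x j + b i j| := by rw [← hyj, hf]
    _ ≤ |a i j * ((a i j * x j + b i j) / |a i j * x j + b i j|) + b i j| :=
      abs_mul_add_le_of_abs_le_one (ha i j) (hK1 x hx j)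
    _ = |a i j * ((radInf (hutch f K))⁻¹ • f i x) j + b i j| := by
      rw [PiLp.smul_apply, smul_eq_mul, ← hyj, hf, div_eq_inv_mul]
    _ ≤ radInf (hutch f (hutchRadInf f K)) :=
      abs_mul_add_le_radInf_hutch hf ((hK.hutch hfc).smul _) hw i j

lemma radInf_hutch_le_of_abs_apply_le_one (hf : ∀ i x j, f i x j = a i j * x j + b i j)
    (hne : K.Nonempty) (hK1 : ∀ x ∈ K, ∀ j, |x j| ≤ 1) {C : ℝ}
    (hC : ∀ i j, |a i j| + |b i j| ≤ C) : radInf (hutch f K) ≤ C := by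
  refine radInf_le hne.hutch fun y hy j ↦ ?_
  obtain ⟨i, x, hx, rfl⟩ := mem_hutch.1 hy
  calc |f i x j| ≤ |a i j| * |x j| + |b i j| := by rw [hf, ← abs_mul]; exact abs_add_le _ _
    _ ≤ |a i j| + |b i j| := by gcongr; exact mul_le_of_le_one_right (abs_nonneg _) (hK1 x hx j)
    _ ≤ C := hC i j

variable {K₀ : Set (EuclideanSpace ℝ (Fin (D + 1)))}

lemma monotone_radInf_hutch_iterate_succ (hf : ∀ i x j, f i x j = a i j * x j + b i j)
    (ha : ∀ i j, 0 ≤ a i j) (hK₀ : IsCompact K₀) (hne : K₀.Nonempty) :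
    Monotone fun n ↦ radInf (hutch f ((hutchRadInf f)^[n + 1] K₀)) := by
  have hfc i := continuous_of_apply_eq_mul_add (hf i)
  refine monotone_nat_of_le_succ fun n ↦ ?_
  rw [Function.iterate_succ_apply' _ (n + 1)]
  exact radInf_hutch_le_radInf_hutch_hutchRadInf hf ha (hK₀.iterate_hutchRadInf hfc _)
    (hne.iterate_hutchRadInf _) fun x hx ↦ abs_apply_le_one_of_mem_iterate_succ hfc hK₀ hx

lemma bddAbove_range_radInf_hutch_iterate_succ (hf : ∀ i x j, f i x j = a i j * x j + b i j)
    (hK₀ : IsCompact K₀) (hne : K₀.Nonempty) :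
    BddAbove (Set.range fun n ↦ radInf (hutch f ((hutchRadInf f)^[n + 1] K₀))) := by
  have hfc i := continuous_of_apply_eq_mul_add (hf i)
  obtain ⟨C, hC⟩ :=
    Finite.exists_le fun q : Fin (p + 1) × Fin (D + 1) ↦ |a q.1 q.2| + |b q.1 q.2|
  refine ⟨C, Set.forall_mem_range.2 fun n ↦ ?_⟩
  exact radInf_hutch_le_of_abs_apply_le_one hf (hne.iterate_hutchRadInf _)
    (fun x hx ↦ abs_apply_le_one_of_mem_iterate_succ hfc hK₀ hx) fun i j ↦ hC (i, j)

end DiagonalHutchinson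

theorem stmt17_general {D p : ℕ}
    (a : Fin (p + 1) → Fin (D + 1) → ℝ) (ha : ∀ i j, 0 ≤ a i j)
    (b : Fin (p + 1) → Fin (D + 1) → ℝ)
    (f : Fin (p + 1) → EuclideanSpace ℝ (Fin (D + 1)) → EuclideanSpace ℝ (Fin (D + 1)))
    (hf : ∀ i x j, f i x j = a i j * x j + b i j)
    (K₀ : Set (EuclideanSpace ℝ (Fin (D + 1)))) (hK₀c : IsCompact K₀) (hK₀ne : K₀.Nonempty)
    (hbig : ∃ i j, ∃ x ∈ (hutchRadInf f)^[1] K₀,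
      (Finset.univ.sup' Finset.univ_nonempty fun q : Fin (p + 1) × Fin (D + 1) =>
        |a q.1 q.2|) < |a i j * x j + b i j|) :
    (∀ n, 1 ≤ n → radInf (hutch f ((hutchRadInf f)^[n] K₀)) ≤
      radInf (hutch f ((hutchRadInf f)^[n + 1] K₀))) ∧
    ∃ d : ℝ,
      Tendsto (fun n => radInf (hutch f ((hutchRadInf f)^[n] K₀))) atTop (𝓝 d) ∧
      (Finset.univ.sup' Finset.univ_nonempty fun q : Fin (p + 1) × Fin (D + 1) =>
        |a q.1 q.2|) < d ∧
      ∀ L : Set (EuclideanSpace ℝ (Fin (D + 1))), IsCompact L → L.Nonempty →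
        d⁻¹ • hutch f L = L →
        Tendsto (fun n => hausdorffDist ((hutchRadInf f)^[n] K₀) L) atTop (𝓝 0) := by
  set lam := Finset.univ.sup' Finset.univ_nonempty fun q : Fin (p + 1) × Fin (D + 1) =>
    |a q.1 q.2|
  have hlam : ∀ i j, |a i j| ≤ lam := fun i j ↦
    Finset.le_sup' (fun q : Fin (p + 1) × Fin (D + 1) ↦ |a q.1 q.2|) (Finset.mem_univ (i, j))
  have hmono := monotone_radInf_hutch_iterate_succ hf ha hK₀c hK₀ne
  obtain ⟨d, hd⟩ : ∃ d, Tendsto (fun n ↦ radInf (hutch f ((hutchRadInf f)^[n + 1] K₀)))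
      atTop (𝓝 d) :=
    ⟨_, tendsto_atTop_ciSup hmono (bddAbove_range_radInf_hutch_iterate_succ hf hK₀c hK₀ne)⟩
  have hlamd : lam < d := by
    obtain ⟨i, j, x, hx, hlt⟩ := hbig
    have hK₁ := hK₀c.iterate_hutchRadInf (fun i ↦ continuous_of_apply_eq_mul_add (hf i)) 1
    exact hlt.trans_le <|
      (abs_mul_add_le_radInf_hutch hf hK₁ hx i j).trans (hmono.ge_of_tendsto hd 0)
  have hd' := (tendsto_add_atTop_iff_nat
    (f := fun n ↦ radInf (hutch f ((hutchRadInf f)^[n] K₀))) 1).1 hd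
  refine ⟨fun n hn ↦ ?_, d, hd', hlamd, fun L hLc hLne hfix ↦ ?_⟩
  · obtain ⟨m, rfl⟩ := Nat.exists_eq_add_of_le' hn
    exact hmono m.le_succ
  · have hlam0 : 0 ≤ lam := (abs_nonneg _).trans (hlam 0 0)
    exact tendsto_hausdorffDist_iterate_hutchRadInf (κ := ⟨lam, hlam0⟩)
      (fun i ↦ lipschitzWith_of_apply_eq_mul_add (hf i) (hlam i)) hK₀c hK₀ne hd' hlamd
      hLc hLne hfix

/-- Proposition `theo:maxradius`. For affine maps with diagonal nonnegative
linear parts, if `max_{i,j,x ∈ H_{ρ∞}(K₀)} |a_{i,j} x_j + b_{i,j}| > max_{i,j} |a_{i,j}|`, then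
the normalizing sequence `(d_n)_{n≥1}` is increasing and converges to some
`d > max_{i,j} |a_{i,j}|`, and `(H_{ρ∞}^n(K₀))_n` converges to the attractor `L_d`. -/
theorem stmt17 {D p : ℕ}
    (a : Fin (p + 1) → Fin (D + 1) → ℝ) (ha : ∀ i j, 0 ≤ a i j)
    (b : Fin (p + 1) → Fin (D + 1) → ℝ)
    (f : Fin (p + 1) → EuclideanSpace ℝ (Fin (D + 1)) → EuclideanSpace ℝ (Fin (D + 1)))
    (hf : ∀ i x j, f i x j = a i j * x j + b i j)
    (K₀ : Set (EuclideanSpace ℝ (Fin (D + 1)))) (hK₀c : IsCompact K₀) (hK₀ne : K₀.Nonempty)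
    (hpos : ∀ n, 0 < radInf (hutch f ((hutchRadInf f)^[n] K₀)))
    (hbig : ∃ i j, ∃ x ∈ (hutchRadInf f)^[1] K₀,
      (Finset.univ.sup' Finset.univ_nonempty fun q : Fin (p + 1) × Fin (D + 1) =>
        |a q.1 q.2|) < |a i j * x j + b i j|) :
    (∀ n, 1 ≤ n → radInf (hutch f ((hutchRadInf f)^[n] K₀)) ≤
      radInf (hutch f ((hutchRadInf f)^[n + 1] K₀))) ∧
    ∃ d : ℝ,
      Tendsto (fun n => radInf (hutch f ((hutchRadInf f)^[n] K₀))) atTop (𝓝 d) ∧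
      (Finset.univ.sup' Finset.univ_nonempty fun q : Fin (p + 1) × Fin (D + 1) =>
        |a q.1 q.2|) < d ∧
      ∀ L : Set (EuclideanSpace ℝ (Fin (D + 1))), IsCompact L → L.Nonempty →
        d⁻¹ • hutch f L = L →
        Tendsto (fun n => hausdorffDist ((hutchRadInf f)^[n] K₀) L) atTop (𝓝 0) :=
  stmt17_general a ha b f hf K₀ hK₀c hK₀ne hbig
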